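/- Fix 0 < ε < 1 and let β = ln K/K, η = (ln K/K)², m = ⌈ε²K/ln K⌉. There exists K₀(ε) such that for all K ≥ K₀ and all d ≥ (1+ε)·2^{K−1}(ln K)²/K, the expected number of m-tuples of satisfying assignments of the random NAE-K-SAT formula Φ(n, dn) with all pairwise Hamming distances in [(β−η)n, βn] is at most exp(−n·ε³·ln K + n·o_K(ln K)), and in particular tends to 0 as n → ∞. -/

import Mathlib

open Real Filter

/-- A random clause: K variables chosen uniformly (with replacement), uniform polarities. -/
abbrev Clause (n K : ℕ) := (Fin K → Fin n) × (Fin K → Bool)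

def litVal {n K : ℕ} (σ : Fin n → Bool) (C : Clause n K) (i : Fin K) : Bool :=
  xor (σ (C.1 i)) (C.2 i)

/-- `σ` NAE-satisfies `C`: at least one true literal and at least one false literal. -/
def naeSat {n K : ℕ} (σ : Fin n → Bool) (C : Clause n K) : Prop :=
  (∃ i, litVal σ C i = true) ∧ (∃ i, litVal σ C i = false)

/-- Expected number of m-tuples (with `m = ⌈ε²K/ln K⌉`) of satisfying assignments of the random
formula `Φ(n, dn)` (uniform over formulas with `⌊dn⌋` clauses) with all pairwise Hamming
distances in `[(β-η)n, βn]`, `β = ln K/K`, `η = (ln K/K)²`. -/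
noncomputable def expectedTuples (K : ℕ) (d ε : ℝ) (n : ℕ) : ℝ :=
  (∑ Φ : Fin ⌊d * n⌋₊ → Clause n K,
      (Nat.card {τ : Fin ⌈ε ^ 2 * K / Real.log K⌉₊ → (Fin n → Bool) //
          (∀ j i, naeSat (τ j) (Φ i)) ∧
          ∀ j k, j ≠ k →
            (Real.log K / K - (Real.log K / K) ^ 2) * n ≤ hammingDist (τ j) (τ k) ∧
            (hammingDist (τ j) (τ k) : ℝ) ≤ (Real.log K / K) * n} : ℝ))
    / (Fintype.card (Fin ⌊d * n⌋₊ → Clause n K) : ℝ)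

/-!
First moment method. The clauses of `Φ(n, dn)` are i.i.d., so the expectation is the sum over
m-tuples `τ` with the prescribed pairwise distances of `q(τ) ^ ⌊dn⌋`, where `q(τ)` is the
probability that one random clause NAE-satisfies every `τ j`. Two assignments at distance `D`
are both violated by exactly `2 (n - D)^K + 2 D^K` clauses, so Bonferroni's inequality cut after
the pair terms gives `q(τ) ≤ 1 - (2m - 2m(m-1)W) / 2^K` with `W = (1-β+β²)^K + β^K`. Fixing
`τ 0`, every other `τ j` lies in a Hamming ball of radius `βn`, of volume at most
`exp(βn (1 + ln K))`. For `K` large `mβ ≈ ε²` and `mW ln K = O(1)`, so at the density threshold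
the exponent per variable is at most `15 - ε³ ln K`: the `o_K(ln K)` term is a constant.
-/

open Finset

section Bonferroni
variable {ι α : Type*} [Fintype ι] [DecidableEq ι] [Fintype α]

lemma bonferroni_ite_forall_le (P : ι → Prop) [DecidablePred P] :
    (if ∀ j, P j then 1 else 0 : ℝ) ≤
      1 - ∑ j, (if ¬ P j then 1 else 0) +
        ∑ j, ∑ k ∈ univ.erase j, (if ¬ P j ∧ ¬ P k then 1 else 0) := by
  set f : ι → ℝ := fun j => if ¬ P j then 1 else 0
  have hf : ∀ j, f j * f j = f j := fun j => by by_cases h : P j <;> simp [f, h]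
  have hpair : ∀ j k, (if ¬ P j ∧ ¬ P k then 1 else 0 : ℝ) = f j * f k := fun j k => by
    simp only [f, ite_zero_mul_ite_zero, mul_one]
  have hpairs : ∑ j, ∑ k ∈ univ.erase j, (if ¬ P j ∧ ¬ P k then 1 else 0 : ℝ) =
      (∑ j, f j) ^ 2 - ∑ j, f j := by
    simp_rw [hpair, ← mul_sum, sum_erase_eq_sub (mem_univ _), mul_sub, hf, sum_sub_distrib,
      ← sum_mul, sq]
  rw [hpairs]
  split_ifs with h
  · simp [f, h]
  · nlinarith [sq_nonneg (1 - ∑ j, f j)]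

lemma bonferroni_card_filter_forall_le (P : ι → α → Prop) [∀ j, DecidablePred (P j)] :
    (#{x | ∀ j, P j x} : ℝ) ≤
      Fintype.card α - ∑ j, (#{x | ¬ P j x} : ℝ) +
        ∑ j, ∑ k ∈ univ.erase j, (#{x | ¬ P j x ∧ ¬ P k x} : ℝ) := by
  simp only [card_filter, Nat.cast_sum, Nat.cast_ite, Nat.cast_one, Nat.cast_zero]
  simp_rw [sum_comm (s := univ.erase _) (t := univ)]
  rw [Fintype.card_eq_sum_ones, Nat.cast_sum, Nat.cast_one, sum_comm (γ := ι) (α := α),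
    sum_comm (γ := ι) (α := α), ← sum_sub_distrib, ← sum_add_distrib]
  exact sum_le_sum fun x _ => bonferroni_ite_forall_le fun j => P j x

end Bonferroni

lemma sum_natCard_div_card_fun_eq {α β : Type*} [Fintype α] [Fintype β] (M : ℕ)
    (R : β → α → Prop) (Q : β → Prop) [∀ τ, DecidablePred (R τ)] [DecidablePred Q] :
    (∑ Φ : Fin M → α, (Nat.card {τ // (∀ i, R τ (Φ i)) ∧ Q τ} : ℝ)) /
        Fintype.card (Fin M → α) =
      ∑ τ, if Q τ then ((#{x | R τ x} : ℝ) / Fintype.card α) ^ M else 0 := by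
  have hcount : ∀ Φ : Fin M → α, (Nat.card {τ // (∀ i, R τ (Φ i)) ∧ Q τ} : ℝ) =
      ∑ τ, (if Q τ then 1 else 0) * ∏ i, if R τ (Φ i) then 1 else 0 := fun Φ => by
    rw [Nat.card_eq_fintype_card, Fintype.card_subtype, card_filter, Nat.cast_sum]
    refine sum_congr rfl fun τ _ => ?_
    rw [prod_boole, ite_zero_mul_ite_zero, mul_one]
    simp [and_comm]
  simp_rw [hcount]
  rw [sum_comm]
  simp_rw [← mul_sum, fun τ => (Fintype.sum_pow (fun x => if R τ x then (1 : ℝ) else 0) M).symm,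
    sum_boole, Fintype.card_fun, Fintype.card_fin, Nat.cast_pow, sum_div, mul_div_assoc,
    ← div_pow, ite_mul, one_mul, zero_mul]

section HammingBall
variable {ι : Type*} [Fintype ι] [DecidableEq ι]

lemma sum_pow_hammingDist (x : ι → Bool) (β : ℝ) :
    ∑ y : ι → Bool, β ^ hammingDist x y = (1 + β) ^ Fintype.card ι := by
  have hprod : ∀ y : ι → Bool, β ^ hammingDist x y = ∏ i, if x i ≠ y i then β else 1 :=
    fun y => by rw [← prod_filter, prod_const]; rfl
  have hfactor : ∀ i, ∑ b : Bool, (if x i ≠ b then β else 1) = 1 + β := fun i => by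
    cases x i <;> simp [add_comm]
  simp_rw [hprod, ← Fintype.prod_sum (fun i b => if x i ≠ b then β else 1), hfactor, prod_const,
    card_univ]

lemma card_hammingBall_mul_pow_le (x : ι → Bool) (r : ℕ) {β : ℝ} (hβ₀ : 0 ≤ β) (hβ₁ : β ≤ 1) :
    (#{y | hammingDist x y ≤ r} : ℝ) * β ^ r ≤ (1 + β) ^ Fintype.card ι :=
  calc (#{y | hammingDist x y ≤ r} : ℝ) * β ^ r
      = ∑ y ∈ {y | hammingDist x y ≤ r}, β ^ r := by rw [sum_const, nsmul_eq_mul]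
    _ ≤ ∑ y ∈ {y | hammingDist x y ≤ r}, β ^ hammingDist x y :=
      sum_le_sum fun _ hy => pow_le_pow_of_le_one hβ₀ hβ₁ (mem_filter.1 hy).2
    _ ≤ ∑ y, β ^ hammingDist x y :=
      sum_le_sum_of_subset_of_nonneg (filter_subset _ _) fun _ _ _ => by positivity
    _ = (1 + β) ^ Fintype.card ι := sum_pow_hammingDist x β

end HammingBall

lemma card_filter_forall_rel_le {α : Type*} [Fintype α] [DecidableEq α] {m : ℕ}
    (R : α → α → Prop) [DecidableRel R] (j₀ : Fin m) {B : ℝ}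
    (hB : ∀ x, (#{y | R x y} : ℝ) ≤ B) :
    (#{τ : Fin m → α | ∀ j, R (τ j₀) (τ j)} : ℝ) ≤ Fintype.card α * B ^ m := by
  have hfiber : ∀ x, #{τ ∈ {τ : Fin m → α | ∀ j, R (τ j₀) (τ j)} | τ j₀ = x} ≤
      #{y | R x y} ^ m := fun x => by
    calc _ ≤ #(Fintype.piFinset fun _ : Fin m => ({y | R x y} : Finset α)) := by
          refine card_le_card fun τ hτ => ?_
          simp only [mem_filter, mem_univ, true_and] at hτ
          simpa [← hτ.2] using hτ.1
      _ = _ := by simp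
  rw [card_eq_sum_card_fiberwise (f := fun τ => τ j₀) (t := univ) fun _ _ => mem_coe.2 (mem_univ _),
    Nat.cast_sum]
  calc _ ≤ ∑ x : α, B ^ m := sum_le_sum fun x _ => (Nat.cast_le.2 (hfiber x)).trans <| by
        push_cast; exact pow_le_pow_left₀ (Nat.cast_nonneg _) (hB x) m
    _ = _ := by simp

def PairwiseHammingDistIn {ι : Type*} [Fintype ι] {m : ℕ} (lo hi : ℝ) (τ : Fin m → ι → Bool) :
    Prop :=
  ∀ j k, j ≠ k → lo ≤ hammingDist (τ j) (τ k) ∧ (hammingDist (τ j) (τ k) : ℝ) ≤ hi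

noncomputable instance {ι : Type*} [Fintype ι] {m : ℕ} (lo hi : ℝ) :
    DecidablePred (PairwiseHammingDistIn lo hi : (Fin m → ι → Bool) → Prop) :=
  Classical.decPred _

lemma card_filter_pairwiseHammingDistIn_le {ι : Type*} [Fintype ι] [DecidableEq ι] {m : ℕ}
    (hm : 0 < m) (lo hi : ℝ) {β : ℝ} (hβ₀ : 0 < β) (hβ₁ : β ≤ 1) :
    (#{τ : Fin m → ι → Bool | PairwiseHammingDistIn lo hi τ} : ℝ) ≤
      2 ^ Fintype.card ι * ((1 + β) ^ Fintype.card ι / β ^ ⌊hi⌋₊) ^ m := by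
  set j₀ : Fin m := ⟨0, hm⟩
  have hsub : #{τ : Fin m → ι → Bool | PairwiseHammingDistIn lo hi τ} ≤
      #{τ : Fin m → ι → Bool | ∀ j, hammingDist (τ j₀) (τ j) ≤ ⌊hi⌋₊} := by
    refine card_le_card fun τ hτ => mem_filter.2 ⟨mem_univ _, fun j => ?_⟩
    rcases eq_or_ne j₀ j with rfl | hj
    · simp
    · exact Nat.le_floor ((mem_filter.1 hτ).2 j₀ j hj).2
  have hball : ∀ x : ι → Bool, (#{y | hammingDist x y ≤ ⌊hi⌋₊} : ℝ) ≤
      (1 + β) ^ Fintype.card ι / β ^ ⌊hi⌋₊ := fun x =>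
    (le_div_iff₀ (by positivity)).2 (card_hammingBall_mul_pow_le x _ hβ₀.le hβ₁)
  calc _ ≤ (#{τ : Fin m → ι → Bool | ∀ j, hammingDist (τ j₀) (τ j) ≤ ⌊hi⌋₊} : ℝ) := by
        exact_mod_cast hsub
    _ ≤ _ := card_filter_forall_rel_le _ j₀ hball
    _ = _ := by simp

lemma one_add_pow_div_pow_floor_le {β x : ℝ} (hβ₀ : 0 < β) (hβ₁ : β ≤ 1) (hβx : 1 ≤ β * x)
    (n : ℕ) :
    (1 + β) ^ n / β ^ ⌊β * n⌋₊ ≤ Real.exp (β * n * (1 + Real.log x)) := by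
  have hx : 0 < x := pos_of_mul_pos_right (one_pos.trans_le hβx) hβ₀.le
  have hlog : 0 ≤ Real.log x := Real.log_nonneg (by nlinarith)
  have hnum : (1 + β) ^ n ≤ Real.exp (β * n) := by
    rw [mul_comm, Real.exp_nat_mul]
    exact pow_le_pow_left₀ (by positivity) (by linarith [Real.add_one_le_exp β]) n
  have hden : 1 / β ^ ⌊β * n⌋₊ ≤ Real.exp (β * n * Real.log x) :=
    calc 1 / β ^ ⌊β * n⌋₊ = (1 / β) ^ ⌊β * n⌋₊ := by rw [one_div_pow]
      _ ≤ x ^ ⌊β * n⌋₊ := pow_le_pow_left₀ (by positivity) ((div_le_iff₀ hβ₀).2 (by linarith)) _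
      _ = Real.exp (⌊β * n⌋₊ * Real.log x) := by rw [Real.exp_nat_mul, Real.exp_log hx]
      _ ≤ Real.exp (β * n * Real.log x) :=
        Real.exp_le_exp.2 (mul_le_mul_of_nonneg_right (Nat.floor_le (by positivity)) hlog)
  calc (1 + β) ^ n / β ^ ⌊β * n⌋₊ = (1 + β) ^ n * (1 / β ^ ⌊β * n⌋₊) := by ring
    _ ≤ Real.exp (β * n) * Real.exp (β * n * Real.log x) :=
      mul_le_mul hnum hden (by positivity) (by positivity)
    _ = Real.exp (β * n * (1 + Real.log x)) := by rw [← Real.exp_add]; ring_nf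

lemma sub_one_mul_le_floor_mul (d : ℝ) (n : ℕ) : (d - 1) * n ≤ ⌊d * n⌋₊ := by
  rcases n.eq_zero_or_pos with rfl | hn
  · simp
  have hn' : (1 : ℝ) ≤ n := by exact_mod_cast hn
  linarith [Nat.sub_one_lt_floor (d * n)]

lemma sum_sum_erase_const {m : ℕ} (c : ℝ) :
    ∑ j : Fin m, ∑ _k ∈ univ.erase j, c = m * (m - 1) * c := by
  simp only [sum_const, card_erase_of_mem (mem_univ _), card_univ, Fintype.card_fin, nsmul_eq_mul]
  rcases Nat.eq_zero_or_pos m with rfl | hm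
  · simp
  · rw [Nat.cast_pred hm]; ring

instance instDecidableNaeSat {n K : ℕ} (σ : Fin n → Bool) (C : Clause n K) :
    Decidable (naeSat σ C) :=
  inferInstanceAs (Decidable ((∃ i, litVal σ C i = true) ∧ ∃ i, litVal σ C i = false))

section Clauses
variable {n K : ℕ}

lemma not_naeSat_iff_forall_eq {σ : Fin n → Bool} {C : Clause n K} (i₀ : Fin K) :
    ¬ naeSat σ C ↔ ∀ i, litVal σ C i = litVal σ C i₀ := by
  unfold naeSat
  constructor
  · intro h i
    by_contra hne
    apply h
    cases h₀ : litVal σ C i₀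
    · exact ⟨⟨i, by simpa [h₀] using hne⟩, ⟨i₀, h₀⟩⟩
    · exact ⟨⟨i₀, h₀⟩, ⟨i, by simpa [h₀] using hne⟩⟩
  · rintro h ⟨⟨i, hi⟩, ⟨k, hk⟩⟩
    rw [h] at hi hk
    simp_all

lemma card_clause_filter_forall (P : Fin n × Bool → Prop) [DecidablePred P] :
    #{C : Clause n K | ∀ i, P (C.1 i, C.2 i)} = #{x | P x} ^ K := by
  rw [← Fintype.card_subtype, ← Fintype.card_subtype]
  calc _ = Fintype.card (Fin K → {x // P x}) := Fintype.card_congr <|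
        ((Equiv.arrowProdEquivProdArrow _ _ _).symm.subtypeEquiv fun _ => Iff.rfl).trans
          Equiv.subtypePiEquivPi
    _ = _ := by simp

lemma card_clause_filter_litVal_eq (σ σ' : Fin n → Bool) (b b' : Bool) :
    #{C : Clause n K | ∀ i, litVal σ C i = b ∧ litVal σ' C i = b'} =
      #{v | xor (σ v) (σ' v) = xor b b'} ^ K := by
  refine (card_clause_filter_forall fun x => xor (σ x.1) x.2 = b ∧ xor (σ' x.1) x.2 = b').trans ?_
  have hfiber : ∀ a a' : Bool,
      ∑ p : Bool, (if xor a p = b ∧ xor a' p = b' then 1 else 0) =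
        if xor a a' = xor b b' then 1 else 0 := by
    revert b b'; decide
  rw [card_filter, card_filter, Fintype.sum_prod_type]
  simp_rw [hfiber]

lemma card_filter_xor_eq_true (σ σ' : Fin n → Bool) :
    #{v | xor (σ v) (σ' v) = true} = hammingDist σ σ' := by
  unfold hammingDist
  congr 1
  exact filter_congr fun v _ => by cases σ v <;> cases σ' v <;> simp

lemma card_filter_xor_eq_false (σ σ' : Fin n → Bool) :
    #{v | xor (σ v) (σ' v) = false} = n - hammingDist σ σ' := by
  have h := card_filter_add_card_filter_not (s := univ)
    fun v : Fin n => xor (σ v) (σ' v) = true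
  simp only [Bool.not_eq_true, card_univ, Fintype.card_fin, card_filter_xor_eq_true] at h
  omega

lemma card_filter_not_naeSat_and (hK : 0 < K) (σ σ' : Fin n → Bool) :
    #{C : Clause n K | ¬ naeSat σ C ∧ ¬ naeSat σ' C} =
      2 * (n - hammingDist σ σ') ^ K + 2 * hammingDist σ σ' ^ K := by
  set i₀ : Fin K := ⟨0, hK⟩
  rw [card_eq_sum_card_fiberwise (f := fun C => (litVal σ C i₀, litVal σ' C i₀)) (t := univ)
    fun _ _ => mem_coe.2 (mem_univ _)]
  have hfiber : ∀ p : Bool × Bool,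
      #{C ∈ ({C | ¬ naeSat σ C ∧ ¬ naeSat σ' C} : Finset (Clause n K)) |
          (litVal σ C i₀, litVal σ' C i₀) = p} =
        #{C : Clause n K | ∀ i, litVal σ C i = p.1 ∧ litVal σ' C i = p.2} := fun p => by
    congr 1
    ext C
    simp only [mem_filter, mem_univ, true_and, not_naeSat_iff_forall_eq i₀, Prod.ext_iff]
    constructor
    · rintro ⟨⟨h, h'⟩, h₁, h₂⟩ i
      exact ⟨(h i).trans h₁, (h' i).trans h₂⟩
    · intro h
      refine ⟨⟨fun i => ?_, fun i => ?_⟩, (h i₀).1, (h i₀).2⟩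
      · rw [(h i).1, (h i₀).1]
      · rw [(h i).2, (h i₀).2]
  simp_rw [hfiber, card_clause_filter_litVal_eq, Fintype.sum_prod_type, Fintype.sum_bool]
  simp only [Bool.xor_self, Bool.xor_true, Bool.xor_false, Bool.not_false,
    card_filter_xor_eq_true, card_filter_xor_eq_false]
  ring

lemma card_filter_not_naeSat (hK : 0 < K) (σ : Fin n → Bool) :
    #{C : Clause n K | ¬ naeSat σ C} = 2 * n ^ K := by
  simpa [hK.ne'] using card_filter_not_naeSat_and hK σ σ

lemma card_filter_forall_naeSat_le {m : ℕ} (hK : 0 < K) {τ : Fin m → Fin n → Bool}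
    {lo hi : ℝ} (hτ : PairwiseHammingDistIn lo hi τ) :
    (#{C : Clause n K | ∀ j, naeSat (τ j) C} : ℝ) ≤
      n ^ K * 2 ^ K - 2 * m * n ^ K + 2 * m * (m - 1) * ((n - lo) ^ K + hi ^ K) := by
  have hpair : ∀ j, ∀ k ∈ univ.erase j,
      (#{C : Clause n K | ¬ naeSat (τ j) C ∧ ¬ naeSat (τ k) C} : ℝ) ≤
        2 * ((n - lo) ^ K + hi ^ K) := fun j k hk => by
    obtain ⟨hlo, hhi⟩ := hτ j k (mem_erase.1 hk).1.symm
    have hle : hammingDist (τ j) (τ k) ≤ n := hammingDist_le_card_fintype.trans_eq (by simp)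
    rw [card_filter_not_naeSat_and hK]
    push_cast [hle]
    have hagree : ((n : ℝ) - hammingDist (τ j) (τ k)) ^ K ≤ (n - lo) ^ K :=
      pow_le_pow_left₀ (sub_nonneg.2 (by exact_mod_cast hle)) (by linarith) K
    have hdiff : (hammingDist (τ j) (τ k) : ℝ) ^ K ≤ hi ^ K :=
      pow_le_pow_left₀ (Nat.cast_nonneg _) hhi K
    linarith
  have hpairs := sum_le_sum fun j (_ : j ∈ univ) => sum_le_sum (hpair j)
  rw [sum_sum_erase_const] at hpairs
  have hbonf := bonferroni_card_filter_forall_le (α := Clause n K) fun j C => naeSat (τ j) C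
  simp only [card_filter_not_naeSat hK, Fintype.card_prod, Fintype.card_fun, Fintype.card_fin,
    Fintype.card_bool, sum_const, card_univ, nsmul_eq_mul] at hbonf
  push_cast at hbonf
  -- `hbonf` decides `∀ j` through `Fintype.decidableForallFintype`, the goal through
  -- `Nat.decidableForallFin`, so the two filters agree only up to `ext`.
  refine Eq.trans_le (by congr 2; ext; simp) (hbonf.trans ?_)
  linarith

end Clauses

/- `beta K`, `tupleSize ε K` and `pairOverlap K` are the paper's `β`, `m` and
`β^K + (1 - β + η)^K` with `η = β²`; `1 - clauseGap m K` bounds the probability that a random clause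
NAE-satisfies all members of an `m`-tuple with pairwise distances in `[(β - η)n, βn]`. -/
noncomputable def beta (K : ℕ) : ℝ := Real.log K / K

noncomputable def tupleSize (ε : ℝ) (K : ℕ) : ℕ := ⌈ε ^ 2 * K / Real.log K⌉₊

noncomputable def pairOverlap (K : ℕ) : ℝ := (1 - beta K + beta K ^ 2) ^ K + beta K ^ K

noncomputable def clauseGap (m K : ℕ) : ℝ := (2 * m - 2 * m * (m - 1) * pairOverlap K) / 2 ^ K

lemma expectedTuples_eq (K : ℕ) (d ε : ℝ) (n : ℕ) :
    expectedTuples K d ε n =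
      ∑ τ : Fin (tupleSize ε K) → Fin n → Bool,
        if PairwiseHammingDistIn ((beta K - beta K ^ 2) * n) (beta K * n) τ then
          ((#{C : Clause n K | ∀ j, naeSat (τ j) C} : ℝ) / Fintype.card (Clause n K)) ^ ⌊d * n⌋₊
        else 0 := by
  have hmoment := sum_natCard_div_card_fun_eq ⌊d * n⌋₊
    (fun (τ : Fin (tupleSize ε K) → Fin n → Bool) (C : Clause n K) => ∀ j, naeSat (τ j) C)
    (PairwiseHammingDistIn ((beta K - beta K ^ 2) * n) (beta K * n))
  refine .trans ?_ (hmoment.trans ?_)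
  · rw [expectedTuples]
    congr 2 with Φ
    exact congrArg Nat.cast <| Nat.card_congr <| Equiv.subtypeEquivRight
      fun (τ : Fin (tupleSize ε K) → Fin n → Bool) => and_congr_left' forall_comm
  · congr! 5

lemma expectedTuples_nonneg (K : ℕ) (d ε : ℝ) (n : ℕ) : 0 ≤ expectedTuples K d ε n := by
  unfold expectedTuples; positivity

lemma card_filter_forall_naeSat_div_le {n K m : ℕ} (hn : 0 < n) (hK : 0 < K)
    {τ : Fin m → Fin n → Bool}
    (hτ : PairwiseHammingDistIn ((beta K - beta K ^ 2) * n) (beta K * n) τ) :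
    (#{C : Clause n K | ∀ j, naeSat (τ j) C} : ℝ) / Fintype.card (Clause n K) ≤
      1 - clauseGap m K := by
  have hcard : (Fintype.card (Clause n K) : ℝ) = n ^ K * 2 ^ K := by simp
  rw [hcard, div_le_iff₀ (by positivity)]
  refine (card_filter_forall_naeSat_le hK hτ).trans_eq ?_
  rw [show (n : ℝ) - (beta K - beta K ^ 2) * n = n * (1 - beta K + beta K ^ 2) by ring, mul_pow,
    mul_pow, clauseGap, pairOverlap]
  field_simp
  ring

lemma card_filter_forall_naeSat_div_pow_le {n K m : ℕ} (hK : 0 < K) {τ : Fin m → Fin n → Bool}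
    (hτ : PairwiseHammingDistIn ((beta K - beta K ^ 2) * n) (beta K * n) τ) (d : ℝ) :
    ((#{C : Clause n K | ∀ j, naeSat (τ j) C} : ℝ) / Fintype.card (Clause n K)) ^ ⌊d * n⌋₊ ≤
      Real.exp (-clauseGap m K * ⌊d * n⌋₊) := by
  rcases n.eq_zero_or_pos with rfl | hn
  · simp
  have hq := card_filter_forall_naeSat_div_le hn hK hτ
  have hq₀ : 0 ≤ (#{C : Clause n K | ∀ j, naeSat (τ j) C} : ℝ) / Fintype.card (Clause n K) := by
    positivity
  calc _ ≤ (1 - clauseGap m K) ^ ⌊d * n⌋₊ := pow_le_pow_left₀ hq₀ hq _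
    _ ≤ Real.exp (-clauseGap m K) ^ ⌊d * n⌋₊ :=
      pow_le_pow_left₀ (hq₀.trans hq) (by linarith [Real.add_one_le_exp (-clauseGap m K)]) _
    _ = Real.exp (-clauseGap m K * ⌊d * n⌋₊) := by rw [← Real.exp_nat_mul, mul_comm]

lemma expectedTuples_le_exp {K : ℕ} {d ε : ℝ} (n : ℕ) (hε : 0 < ε) (hlog : 1 ≤ Real.log K) :
    expectedTuples K d ε n ≤
      Real.exp (n * (Real.log 2 + tupleSize ε K * beta K * (1 + Real.log K)) -
        clauseGap (tupleSize ε K) K * ⌊d * n⌋₊) := by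
  set m := tupleSize ε K
  set c := clauseGap m K
  set M := ⌊d * n⌋₊
  have hKR : (0 : ℝ) < K :=
    one_pos.trans ((Real.log_pos_iff K.cast_nonneg).1 (one_pos.trans_le hlog))
  have hK : 0 < K := by exact_mod_cast hKR
  have hβ₀ : 0 < beta K := div_pos (by linarith) hKR
  have hβ₁ : beta K ≤ 1 :=
    (div_le_one hKR).2 ((Real.log_le_sub_one_of_pos hKR).trans (by linarith))
  have hβK : 1 ≤ beta K * K := by rw [beta, div_mul_cancel₀ _ hKR.ne']; exact hlog
  have hm : 0 < m := Nat.ceil_pos.2 (by positivity)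
  rw [expectedTuples_eq]
  calc _ ≤ ∑ τ : Fin m → Fin n → Bool,
        if PairwiseHammingDistIn ((beta K - beta K ^ 2) * n) (beta K * n) τ then
          Real.exp (-c * M) else 0 := by
        gcongr with τ
        split_ifs with hτ
        · exact card_filter_forall_naeSat_div_pow_le hK hτ d
        · rfl
    _ = (#{τ : Fin m → Fin n → Bool |
          PairwiseHammingDistIn ((beta K - beta K ^ 2) * n) (beta K * n) τ} : ℝ) *
          Real.exp (-c * M) := by rw [← sum_filter, sum_const, nsmul_eq_mul]
    _ ≤ 2 ^ n * ((1 + beta K) ^ n / beta K ^ ⌊beta K * n⌋₊) ^ m * Real.exp (-c * M) := by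
      gcongr
      simpa using card_filter_pairwiseHammingDistIn_le (ι := Fin n) hm _ (beta K * n) hβ₀ hβ₁
    _ ≤ Real.exp (n * Real.log 2) * Real.exp (beta K * n * (1 + Real.log K)) ^ m *
          Real.exp (-c * M) := by
      gcongr
      · rw [Real.exp_nat_mul, Real.exp_log two_pos]
      · exact one_add_pow_div_pow_floor_le hβ₀ hβ₁ hβK n
    _ = _ := by rw [← Real.exp_nat_mul, ← Real.exp_add, ← Real.exp_add]; ring_nf

section Asymptotics
variable {ε : ℝ} {K : ℕ}

lemma sq_le_tupleSize_mul_beta (hlog : 0 < Real.log K) : ε ^ 2 ≤ tupleSize ε K * beta K := by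
  have hK : (0 : ℝ) < K := one_pos.trans ((Real.log_pos_iff K.cast_nonneg).1 hlog)
  calc ε ^ 2 = ε ^ 2 * K / Real.log K * beta K := by rw [beta]; field_simp
    _ ≤ tupleSize ε K * beta K :=
      mul_le_mul_of_nonneg_right (Nat.le_ceil _) (div_pos hlog hK).le

lemma tupleSize_mul_beta_le (hε : 0 < ε) (hlog : 0 < Real.log K) :
    tupleSize ε K * beta K ≤ ε ^ 2 + beta K := by
  have hK : (0 : ℝ) < K := one_pos.trans ((Real.log_pos_iff K.cast_nonneg).1 hlog)
  calc (tupleSize ε K : ℝ) * beta K ≤ (ε ^ 2 * K / Real.log K + 1) * beta K :=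
        mul_le_mul_of_nonneg_right (Nat.ceil_lt_add_one (by positivity)).le (div_pos hlog hK).le
    _ = ε ^ 2 + beta K := by rw [beta]; field_simp

lemma one_sub_beta_add_sq_pow_le (hK : 0 < K) (hsq : Real.log K ^ 2 ≤ K) :
    (1 - beta K + beta K ^ 2) ^ K ≤ Real.exp 1 / K := by
  have hKR : (0 : ℝ) < K := by exact_mod_cast hK
  calc (1 - beta K + beta K ^ 2) ^ K ≤ Real.exp (-(beta K - beta K ^ 2)) ^ K :=
        pow_le_pow_left₀ (by nlinarith [sq_nonneg (beta K - 1)])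
          (by linarith [Real.add_one_le_exp (-(beta K - beta K ^ 2))]) K
    _ = Real.exp (-Real.log K + Real.log K ^ 2 / K) := by
        rw [← Real.exp_nat_mul, beta]; congr 1; field_simp; ring
    _ ≤ Real.exp (1 - Real.log K) := by
        gcongr; linarith [(div_le_one hKR).2 hsq]
    _ = Real.exp 1 / K := by rw [Real.exp_sub, Real.exp_log hKR]

end Asymptotics

structure IsLargeFor (ε : ℝ) (K : ℕ) : Prop where
  twenty_le_cube_mul_log : 20 ≤ ε ^ 3 * Real.log K
  log_sq_le : Real.log K ^ 2 ≤ K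
  two_mul_sq_le : 2 * (K : ℝ) ^ 2 ≤ 2 ^ K

lemma eventually_isLargeFor {ε : ℝ} (hε : 0 < ε) : ∀ᶠ K : ℕ in atTop, IsLargeFor ε K := by
  have hlog : Tendsto (fun K : ℕ => Real.log K) atTop atTop :=
    Real.tendsto_log_atTop.comp tendsto_natCast_atTop_atTop
  have hsq : Tendsto (fun K : ℕ => Real.log K ^ 2 / K) atTop (nhds 0) := by
    simpa [Function.comp_def] using
      (Real.tendsto_pow_log_div_mul_add_atTop 1 0 2 one_ne_zero).comp tendsto_natCast_atTop_atTop
  filter_upwards [(hlog.const_mul_atTop (pow_pos hε 3)).eventually_ge_atTop 20,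
    hsq.eventually_le_const one_pos, eventually_gt_atTop 0,
    (tendsto_pow_const_div_const_pow_of_one_lt 2 one_lt_two).eventually_le_const
      (half_pos one_pos)] with K hcube hsq hK hpow
  refine ⟨hcube, (div_le_one (by exact_mod_cast hK)).1 hsq, ?_⟩
  rw [div_le_iff₀ (by positivity)] at hpow
  linarith

namespace IsLargeFor
variable {ε : ℝ} {K : ℕ}

lemma twenty_le_log (hε₀ : 0 < ε) (hε₁ : ε < 1) (hK : IsLargeFor ε K) : 20 ≤ Real.log K := by
  have h3 : ε ^ 3 < 1 := pow_lt_one₀ hε₀.le hε₁ (by norm_num)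
  have hlog : 0 < Real.log K :=
    pos_of_mul_pos_right (a := ε ^ 3) (by linarith [hK.twenty_le_cube_mul_log]) (by positivity)
  nlinarith [hK.twenty_le_cube_mul_log]

lemma cast_pos (hε₀ : 0 < ε) (hε₁ : ε < 1) (hK : IsLargeFor ε K) : (0 : ℝ) < K :=
  one_pos.trans <| (Real.log_pos_iff K.cast_nonneg).1 <|
    (by norm_num : (0 : ℝ) < 20).trans_le (hK.twenty_le_log hε₀ hε₁)

lemma beta_pos (hε₀ : 0 < ε) (hε₁ : ε < 1) (hK : IsLargeFor ε K) : 0 < beta K :=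
  div_pos ((by norm_num : (0 : ℝ) < 20).trans_le (hK.twenty_le_log hε₀ hε₁)) (hK.cast_pos hε₀ hε₁)

lemma beta_mul_log_le_one (hε₀ : 0 < ε) (hε₁ : ε < 1) (hK : IsLargeFor ε K) :
    beta K * Real.log K ≤ 1 := by
  rw [beta, div_mul_eq_mul_div, ← sq, div_le_one (hK.cast_pos hε₀ hε₁)]
  exact hK.log_sq_le

lemma beta_le (hε₀ : 0 < ε) (hε₁ : ε < 1) (hK : IsLargeFor ε K) : beta K ≤ 1 / 20 := by
  have hβ₀ := hK.beta_pos hε₀ hε₁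
  rw [le_div_iff₀ (by norm_num)]
  nlinarith [hK.beta_mul_log_le_one hε₀ hε₁, hK.twenty_le_log hε₀ hε₁]

lemma tupleSize_le (hε₀ : 0 < ε) (hε₁ : ε < 1) (hK : IsLargeFor ε K) :
    (tupleSize ε K : ℝ) ≤ K := by
  have hL := hK.twenty_le_log hε₀ hε₁
  have hKR := hK.cast_pos hε₀ hε₁
  have hβ₀ := hK.beta_pos hε₀ hε₁
  have hβK : beta K * K = Real.log K := by rw [beta, div_mul_cancel₀ _ hKR.ne']
  refine le_of_mul_le_mul_right ?_ hβ₀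
  rw [mul_comm (K : ℝ), hβK]
  nlinarith [tupleSize_mul_beta_le hε₀ (by linarith : 0 < Real.log K), hK.beta_le hε₀ hε₁]

lemma tupleSize_mul_pairOverlap_mul_log_le (hε₀ : 0 < ε) (hε₁ : ε < 1) (hK : IsLargeFor ε K) :
    tupleSize ε K * pairOverlap K * Real.log K ≤ 5 := by
  have hL := hK.twenty_le_log hε₀ hε₁
  have hKR := hK.cast_pos hε₀ hε₁
  have hβ₀ := hK.beta_pos hε₀ hε₁
  have hβ := hK.beta_le hε₀ hε₁
  have hmβ := tupleSize_mul_beta_le hε₀ (by linarith : 0 < Real.log K)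
  have hfirst : tupleSize ε K * (1 - beta K + beta K ^ 2) ^ K * Real.log K ≤ 4 := by
    have he : Real.exp 1 ≤ 3 := by linarith [Real.exp_one_lt_d9]
    calc _ ≤ tupleSize ε K * (Real.exp 1 / K) * Real.log K := by
          gcongr; exact one_sub_beta_add_sq_pow_le (by exact_mod_cast hKR) hK.log_sq_le
      _ = Real.exp 1 * (tupleSize ε K * beta K) := by rw [beta]; ring
      _ ≤ 3 * (ε ^ 2 + 1 / 20) := by
          gcongr
          exact hmβ.trans (by linarith)
      _ ≤ 4 := by nlinarith
  have hsecond : tupleSize ε K * beta K ^ K * Real.log K ≤ 1 := by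
    have hm := hK.tupleSize_le hε₀ hε₁
    have hLK : Real.log K ≤ K := (Real.log_le_sub_one_of_pos hKR).trans (by linarith)
    calc _ ≤ (K : ℝ) * (1 / 2) ^ K * K := by
          gcongr
          linarith
      _ = 2 * K ^ 2 / 2 ^ K / 2 := by rw [one_div_pow]; field_simp
      _ ≤ 1 := by
          rw [div_le_iff₀ two_pos, div_le_iff₀ (by positivity)]
          linarith [hK.two_mul_sq_le, (by positivity : (0 : ℝ) < 2 ^ K)]
  rw [pairOverlap]
  linarith

lemma pairOverlap_nonneg (hε₀ : 0 < ε) (hε₁ : ε < 1) (hK : IsLargeFor ε K) :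
    0 ≤ pairOverlap K := by
  have hβ₀ := hK.beta_pos hε₀ hε₁
  have : 0 ≤ 1 - beta K + beta K ^ 2 := by nlinarith [hK.beta_le hε₀ hε₁]
  rw [pairOverlap]; positivity

lemma one_le_tupleSize (hε₀ : 0 < ε) (hε₁ : ε < 1) (hK : IsLargeFor ε K) :
    (1 : ℝ) ≤ tupleSize ε K := by
  have hL := hK.twenty_le_log hε₀ hε₁
  exact_mod_cast Nat.ceil_pos.2 (div_pos (mul_pos (by positivity) (hK.cast_pos hε₀ hε₁))
    (by linarith))

lemma tupleSize_mul_pairOverlap_le (hε₀ : 0 < ε) (hε₁ : ε < 1) (hK : IsLargeFor ε K) :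
    tupleSize ε K * pairOverlap K ≤ 1 / 4 := by
  have hL := hK.twenty_le_log hε₀ hε₁
  have hW := hK.tupleSize_mul_pairOverlap_mul_log_le hε₀ hε₁
  have hmW : 0 ≤ tupleSize ε K * pairOverlap K :=
    mul_nonneg (by positivity) (hK.pairOverlap_nonneg hε₀ hε₁)
  nlinarith

lemma clauseGap_nonneg (hε₀ : 0 < ε) (hε₁ : ε < 1) (hK : IsLargeFor ε K) :
    0 ≤ clauseGap (tupleSize ε K) K := by
  have hm := hK.one_le_tupleSize hε₀ hε₁
  have hmW := hK.tupleSize_mul_pairOverlap_le hε₀ hε₁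
  have hW := hK.pairOverlap_nonneg hε₀ hε₁
  rw [clauseGap]
  apply div_nonneg _ (by positivity)
  nlinarith [mul_nonneg (by linarith : (0 : ℝ) ≤ tupleSize ε K) hW]

lemma clauseGap_le_one (hε₀ : 0 < ε) (hε₁ : ε < 1) (hK : IsLargeFor ε K) :
    clauseGap (tupleSize ε K) K ≤ 1 := by
  have hm := hK.one_le_tupleSize hε₀ hε₁
  have hmK := hK.tupleSize_le hε₀ hε₁
  have hW := hK.pairOverlap_nonneg hε₀ hε₁
  have hpow := hK.two_mul_sq_le
  rw [clauseGap, div_le_one (by positivity)]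
  nlinarith [mul_nonneg (mul_nonneg (by linarith : (0 : ℝ) ≤ tupleSize ε K)
    (by linarith : (0 : ℝ) ≤ tupleSize ε K - 1)) hW]

lemma le_clauseGap_mul (hε₀ : 0 < ε) (hε₁ : ε < 1) (hK : IsLargeFor ε K) {d : ℝ}
    (hd : (1 + ε) * 2 ^ (K - 1) * Real.log K ^ 2 / K ≤ d) :
    (ε ^ 2 + ε ^ 3) * Real.log K - 10 ≤ clauseGap (tupleSize ε K) K * d := by
  have hL := hK.twenty_le_log hε₀ hε₁
  have hKR := hK.cast_pos hε₀ hε₁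
  have hm := hK.one_le_tupleSize hε₀ hε₁
  have hW := hK.pairOverlap_nonneg hε₀ hε₁
  have hmW := hK.tupleSize_mul_pairOverlap_le hε₀ hε₁
  have hmWL := hK.tupleSize_mul_pairOverlap_mul_log_le hε₀ hε₁
  have hβ₀ := hK.beta_pos hε₀ hε₁
  have h2K : (2 : ℝ) ^ K = 2 * 2 ^ (K - 1) := by
    rw [← pow_succ', Nat.sub_add_cancel (by exact_mod_cast hKR : 0 < K)]
  have hε : ε ^ 2 * (1 + ε) ≤ 2 := by nlinarith
  calc (ε ^ 2 + ε ^ 3) * Real.log K - 10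
      ≤ ε ^ 2 * (1 + ε) * (1 - tupleSize ε K * pairOverlap K) * Real.log K := by
        have := mul_le_mul hε hmWL (by positivity) (by norm_num)
        linarith
    _ ≤ tupleSize ε K * beta K * (1 + ε) * (1 - tupleSize ε K * pairOverlap K) * Real.log K := by
        gcongr
        · linarith
        · exact sq_le_tupleSize_mul_beta (by linarith)
    _ ≤ (tupleSize ε K - tupleSize ε K * (tupleSize ε K - 1) * pairOverlap K) *
          (1 + ε) * Real.log K * beta K := by
        have : tupleSize ε K * (tupleSize ε K - 1) * pairOverlap K ≤
            tupleSize ε K * (tupleSize ε K * pairOverlap K) := by nlinarith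
        have : 0 ≤ (1 + ε) * Real.log K * beta K := by positivity
        nlinarith
    _ = clauseGap (tupleSize ε K) K * ((1 + ε) * 2 ^ (K - 1) * Real.log K ^ 2 / K) := by
        rw [clauseGap, h2K, beta]; field_simp
    _ ≤ clauseGap (tupleSize ε K) K * d :=
        mul_le_mul_of_nonneg_left hd (hK.clauseGap_nonneg hε₀ hε₁)

lemma rate_le (hε₀ : 0 < ε) (hε₁ : ε < 1) (hK : IsLargeFor ε K) {d : ℝ}
    (hd : (1 + ε) * 2 ^ (K - 1) * Real.log K ^ 2 / K ≤ d) :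
    Real.log 2 + tupleSize ε K * beta K * (1 + Real.log K) -
        clauseGap (tupleSize ε K) K * (d - 1) ≤ 15 - ε ^ 3 * Real.log K := by
  have hL := hK.twenty_le_log hε₀ hε₁
  have hmβ := mul_le_mul_of_nonneg_right (tupleSize_mul_beta_le hε₀ (by linarith : 0 < Real.log K))
    (by linarith : 0 ≤ 1 + Real.log K)
  have hβ := hK.beta_le hε₀ hε₁
  have hβL := hK.beta_mul_log_le_one hε₀ hε₁
  have hcd := hK.le_clauseGap_mul hε₀ hε₁ hd
  have hc := hK.clauseGap_le_one hε₀ hε₁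
  have hε : ε ^ 2 ≤ 1 := by nlinarith
  have hlog2 : Real.log 2 ≤ 1 := by linarith [Real.log_two_lt_d9]
  linarith

lemma expectedTuples_le_exp_rate (hε₀ : 0 < ε) (hε₁ : ε < 1) (hK : IsLargeFor ε K) {d : ℝ}
    (hd : (1 + ε) * 2 ^ (K - 1) * Real.log K ^ 2 / K ≤ d) (n : ℕ) :
    expectedTuples K d ε n ≤ Real.exp (n * (15 - ε ^ 3 * Real.log K)) := by
  have hfloor := mul_le_mul_of_nonneg_left (sub_one_mul_le_floor_mul d n)
    (hK.clauseGap_nonneg hε₀ hε₁)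
  have hrate := mul_le_mul_of_nonneg_left (hK.rate_le hε₀ hε₁ hd) n.cast_nonneg
  refine (expectedTuples_le_exp n hε₀ (by linarith [hK.twenty_le_log hε₀ hε₁])).trans ?_
  gcongr
  linarith

end IsLargeFor

/-- For `K` large and `d ≥ (1+ε)2^{K-1}(ln K)²/K`, the expected number of such m-tuples of
satisfying assignments is at most `exp(-nε³ ln K + n o_K(ln K))`, and in particular → 0. -/
theorem stmt7 (ε : ℝ) (hε0 : 0 < ε) (hε1 : ε < 1) :
    ∃ g : ℕ → ℝ, g =o[atTop] (fun K : ℕ => Real.log K) ∧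
      ∃ K₀ : ℕ, ∀ K : ℕ, K₀ ≤ K →
        ∀ d : ℝ, (1 + ε) * 2 ^ (K - 1) * (Real.log K) ^ 2 / K ≤ d →
          (∀ n : ℕ, expectedTuples K d ε n
              ≤ Real.exp (-(n : ℝ) * ε ^ 3 * Real.log K + (n : ℝ) * g K)) ∧
          Tendsto (fun n : ℕ => expectedTuples K d ε n) atTop (nhds 0) := by
  refine ⟨fun _ => 15, Asymptotics.isLittleO_const_left.2 <| .inr <|
    tendsto_abs_atTop_atTop.comp (Real.tendsto_log_atTop.comp tendsto_natCast_atTop_atTop), ?_⟩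
  obtain ⟨K₀, hK₀⟩ := eventually_atTop.1 (eventually_isLargeFor hε0)
  refine ⟨K₀, fun K hK d hd => ?_⟩
  have hbound := (hK₀ K hK).expectedTuples_le_exp_rate hε0 hε1 hd
  have hrate : 15 - ε ^ 3 * Real.log K < 0 := by linarith [(hK₀ K hK).twenty_le_cube_mul_log]
  refine ⟨fun n => (hbound n).trans_eq (by ring_nf), ?_⟩
  exact squeeze_zero (fun n => expectedTuples_nonneg K d ε n) hbound
    (Real.tendsto_exp_atBot.comp (tendsto_natCast_atTop_atTop.atTop_mul_const_of_neg hrate))
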